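/- Let P = X(Y^TX)^†Y^T ∈ ℝ^{n×n} be an oblique projector with P ≠ 0 and P ≠ I. Then ‖P‖₂ = ‖I − P‖₂. -/

import Mathlib

/-!
For an idempotent `P` on an inner product space, split `x = u + v` with `u = P x` and
`v = (1 - P) x`. The vector `y = (‖v‖ / ‖u‖) u + (‖u‖ / ‖v‖) v` swaps the lengths of the two
parts and keeps `re ⟪u, v⟫`, so `‖y‖ = ‖x‖`, while `‖(1 - P) y‖ = ‖u‖ = ‖P x‖`. Hence
`‖P‖ ≤ ‖1 - P‖`, and applying this to `1 - P` gives equality. The spectral norm `spec` is the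
operator norm of `Matrix.toEuclideanCLM`.
-/

open Matrix

noncomputable section

/-- `B` is the Moore–Penrose pseudoinverse of `A` (the four Penrose conditions). -/
def IsMP {m n : ℕ} (A : Matrix (Fin m) (Fin n) ℝ) (B : Matrix (Fin n) (Fin m) ℝ) : Prop :=
  A * B * A = A ∧ B * A * B = B ∧ (A * B)ᵀ = A * B ∧ (B * A)ᵀ = B * A

/-- Euclidean norm of a vector. -/
def enorm {a : ℕ} (v : Fin a → ℝ) : ℝ := Real.sqrt (∑ i, (v i) ^ 2)

/-- Spectral (ℓ2 operator) norm of a matrix. -/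
def spec {a b : ℕ} (M : Matrix (Fin a) (Fin b) ℝ) : ℝ :=
  sSup {r | ∃ x : Fin b → ℝ, _root_.enorm x = 1 ∧ r = _root_.enorm (M.mulVec x)}

/-- Selection matrix whose columns are the columns of the identity indexed by `g`. -/
def sel {a b : ℕ} (g : Fin a → Fin b) : Matrix (Fin b) (Fin a) ℝ :=
  fun i j => if g j = i then 1 else 0

section InnerProductSpace

variable {𝕜 E : Type*} [RCLike 𝕜] [NormedAddCommGroup E] [InnerProductSpace 𝕜 E]

theorem norm_smul_add_smul_swap {u v : E} (hu : u ≠ 0) (hv : v ≠ 0) :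
    ‖((‖v‖ / ‖u‖ : ℝ) : 𝕜) • u + ((‖u‖ / ‖v‖ : ℝ) : 𝕜) • v‖ = ‖u + v‖ := by
  have hu' : ‖u‖ ≠ 0 := norm_ne_zero_iff.2 hu
  have hv' : ‖v‖ ≠ 0 := norm_ne_zero_iff.2 hv
  refine (sq_eq_sq₀ (norm_nonneg _) (norm_nonneg _)).1 ?_
  rw [norm_add_sq (𝕜 := 𝕜), norm_add_sq (𝕜 := 𝕜), norm_smul, norm_smul, inner_smul_left,
    inner_smul_right, RCLike.conj_ofReal, ← mul_assoc, ← RCLike.ofReal_mul, RCLike.re_ofReal_mul]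
  simp only [RCLike.norm_ofReal, abs_div, abs_norm]
  field_simp
  ring

end InnerProductSpace

theorem IsIdempotentElem.one_le_norm {R : Type*} [NonUnitalNormedRing R] {p : R}
    (hp : IsIdempotentElem p) (h0 : p ≠ 0) : 1 ≤ ‖p‖ := by
  have hpos : 0 < ‖p‖ := norm_pos_iff.2 h0
  refine le_of_mul_le_mul_right ?_ hpos
  calc 1 * ‖p‖ = ‖p * p‖ := by rw [one_mul, hp.eq]
    _ ≤ ‖p‖ * ‖p‖ := norm_mul_le p p

namespace ContinuousLinearMap

variable {𝕜 E : Type*} [RCLike 𝕜] [NormedAddCommGroup E] [InnerProductSpace 𝕜 E]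

theorem norm_le_norm_one_sub_of_isIdempotentElem {P : E →L[𝕜] E} (hP : IsIdempotentElem P)
    (h1 : P ≠ 1) : ‖P‖ ≤ ‖1 - P‖ := by
  refine opNorm_le_bound _ (norm_nonneg _) fun x => ?_
  set u := P x with hu
  set v := (1 - P) x with hv
  have hQ : IsIdempotentElem (1 - P) := hP.one_sub
  have hQu : (1 - P) u = 0 := by
    rw [hu, ← mul_apply_eq_comp, sub_mul, one_mul, hP.eq, sub_self, _root_.zero_apply]
  have hQv : (1 - P) v = v := by rw [hv, ← mul_apply_eq_comp, hQ.eq]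
  have huv : u + v = x := by simp [hu, hv]
  rcases eq_or_ne u 0 with hu0 | hu0
  · rw [hu0, norm_zero]; positivity
  rcases eq_or_ne v 0 with hv0 | hv0
  · have hx : u = x := by rw [← huv, hv0, add_zero]
    rw [hx]
    exact le_mul_of_one_le_left (norm_nonneg x) (hQ.one_le_norm (sub_ne_zero.2 h1.symm))
  set y := ((‖v‖ / ‖u‖ : ℝ) : 𝕜) • u + ((‖u‖ / ‖v‖ : ℝ) : 𝕜) • v
  have hQy : ‖(1 - P) y‖ = ‖u‖ := by
    rw [map_add, map_smul, map_smul, hQu, hQv, smul_zero, zero_add, norm_smul, RCLike.norm_ofReal,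
      abs_div, abs_norm, abs_norm, div_mul_cancel₀ _ (norm_ne_zero_iff.2 hv0)]
  have hy : ‖y‖ = ‖x‖ := by rw [norm_smul_add_smul_swap hu0 hv0, huv]
  calc ‖u‖ = ‖(1 - P) y‖ := hQy.symm
    _ ≤ ‖1 - P‖ * ‖y‖ := le_opNorm _ _
    _ = ‖1 - P‖ * ‖x‖ := by rw [hy]

theorem norm_one_sub_eq_norm_of_isIdempotentElem {P : E →L[𝕜] E} (hP : IsIdempotentElem P)
    (h0 : P ≠ 0) (h1 : P ≠ 1) : ‖1 - P‖ = ‖P‖ := by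
  refine le_antisymm ?_ (norm_le_norm_one_sub_of_isIdempotentElem hP h1)
  simpa using norm_le_norm_one_sub_of_isIdempotentElem hP.one_sub fun h => h0 (sub_eq_self.1 h)

end ContinuousLinearMap

theorem enorm_eq_norm_toLp {a : ℕ} (v : Fin a → ℝ) : _root_.enorm v = ‖WithLp.toLp 2 v‖ := by
  simp [_root_.enorm, EuclideanSpace.norm_eq]

theorem spec_eq_norm_toEuclideanCLM {a : ℕ} (M : Matrix (Fin a) (Fin a) ℝ) :
    spec M = ‖toEuclideanCLM (𝕜 := ℝ) M‖ := by
  rw [← ContinuousLinearMap.sSup_sphere_eq_norm, spec]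
  congr 1
  ext r
  constructor
  · rintro ⟨x, hx, rfl⟩
    refine ⟨WithLp.toLp 2 x, ?_, ?_⟩
    · rwa [mem_sphere_zero_iff_norm, ← enorm_eq_norm_toLp]
    · dsimp only
      rw [toEuclideanCLM_toLp, enorm_eq_norm_toLp]
  · rintro ⟨y, hy, rfl⟩
    refine ⟨WithLp.ofLp y, ?_, ?_⟩
    · rwa [enorm_eq_norm_toLp, WithLp.toLp_ofLp, ← mem_sphere_zero_iff_norm]
    · rw [enorm_eq_norm_toLp, ← ofLp_toEuclideanCLM, WithLp.toLp_ofLp]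

theorem oblique_projector_norm_eq_general {n k l : ℕ}
    (X : Matrix (Fin n) (Fin k) ℝ) (Y : Matrix (Fin n) (Fin l) ℝ)
    (G : Matrix (Fin k) (Fin l) ℝ)
    (hidem : (X * G * Yᵀ) * (X * G * Yᵀ) = X * G * Yᵀ)
    (hP0 : X * G * Yᵀ ≠ 0) (hP1 : X * G * Yᵀ ≠ 1) :
    spec (X * G * Yᵀ) = spec (1 - X * G * Yᵀ) := by
  have hE : IsIdempotentElem (toEuclideanCLM (𝕜 := ℝ) (X * G * Yᵀ)) := by
    rw [IsIdempotentElem, ← map_mul, hidem]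
  rw [spec_eq_norm_toEuclideanCLM, spec_eq_norm_toEuclideanCLM, map_sub, map_one]
  exact (ContinuousLinearMap.norm_one_sub_eq_norm_of_isIdempotentElem hE
    ((map_ne_zero_iff _ toEuclideanCLM.injective).2 hP0)
    ((map_ne_one_iff _ toEuclideanCLM.injective).2 hP1)).symm

/-- a nontrivial oblique projector `P = X (Yᵀ X)† Yᵀ` (idempotent, with
`P ≠ 0` and `P ≠ I`) satisfies `‖P‖₂ = ‖I − P‖₂`. -/
theorem oblique_projector_norm_eq {n k l : ℕ}
    (X : Matrix (Fin n) (Fin k) ℝ) (Y : Matrix (Fin n) (Fin l) ℝ)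
    (G : Matrix (Fin k) (Fin l) ℝ) (hG : IsMP (Yᵀ * X) G)
    (hidem : (X * G * Yᵀ) * (X * G * Yᵀ) = X * G * Yᵀ)
    (hP0 : X * G * Yᵀ ≠ 0) (hP1 : X * G * Yᵀ ≠ 1) :
    spec (X * G * Yᵀ) = spec (1 - X * G * Yᵀ) :=
  oblique_projector_norm_eq_general X Y G hidem hP0 hP1
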